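/- arXiv:1304.3288 — 5 statements merged into one kernel-verified Lean document; each statement's English description precedes it below -/
import Mathlib

section
/- Suppose X, Y : [0,T] → V are continuous functions satisfying X_t = ∫_0^t S_{t−s} F(X_s) ds + O_t and Y_t = ∫_0^t S_{t−s} F(Y_s) ds + O_t for every t ∈ [0,T]. Then X_t = Y_t for all t ∈ [0,T]. -/
/-!
Both solutions are bounded on `[0, T]`, so `F` is Lipschitz along them with some constant `L`,
and `φ = ‖X - Y‖` satisfies the singular Gronwall inequality
`φ t ≤ C L ∫₀ᵗ (t - s)^(-α) φ s ds`. As `∫ₐᵗ (t - s)^(-α) ds = (t - a)^(1-α) / (1 - α)` is small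
for `t - a` small, on a window `[a, a + δ]` past a point up to which `φ` vanishes the maximum `M`
of `φ` satisfies `M ≤ M / 2`; stepping through `[0, T]` by windows of length `δ` gives `φ = 0`.
Measurability of the integrands comes from joint continuity of `(t, w) ↦ S t w`, which follows
from strong continuity and the local bound on `‖S t‖`.
-/

open Set Filter Topology MeasureTheory intervalIntegral
open scoped NNReal

theorem le_mul_rpow_neg_of_rpow_mul_le {t x C α : ℝ} (ht : 0 < t) (h : t ^ α * x ≤ C) :
    x ≤ C * t ^ (-α) := by
  rw [Real.rpow_neg ht.le, ← div_eq_mul_inv, le_div_iff₀ (Real.rpow_pos_of_pos ht α), mul_comm]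
  exact h

theorem exists_lipschitzOnWith_closedBall {V W : Type*} [SeminormedAddCommGroup V]
    [SeminormedAddCommGroup W] {F : V → W}
    (hF : ∀ r : ℝ, 0 < r → ∃ L : ℝ, ∀ v w : V, ‖v‖ ≤ r → ‖w‖ ≤ r →
      ‖F v - F w‖ ≤ L * ‖v - w‖) (r : ℝ) :
    ∃ L : ℝ≥0, LipschitzOnWith L F (Metric.closedBall 0 r) := by
  obtain ⟨L, hL⟩ := hF (max r 1) (by positivity)
  refine ⟨L.toNNReal, LipschitzOnWith.of_dist_le' fun v hv w hw => ?_⟩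
  rw [mem_closedBall_zero_iff] at hv hw
  simpa only [dist_eq_norm] using
    hL v w (hv.trans (le_max_left _ _)) (hw.trans (le_max_left _ _))

theorem continuousOn_apply_of_locally_bounded {X E F : Type*} [TopologicalSpace X]
    [SeminormedAddCommGroup E] [NormedSpace ℝ E] [SeminormedAddCommGroup F] [NormedSpace ℝ F]
    {S : X → E →L[ℝ] F} {s : Set X} (hS : ∀ w, ContinuousOn (fun x => S x w) s)
    (hbdd : ∀ x ∈ s, ∃ K, ∀ᶠ y in 𝓝 x, y ∈ s → ‖S y‖ ≤ K) :
    ContinuousOn (fun p : X × E => S p.1 p.2) (s ×ˢ univ) := by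
  rintro ⟨x, w⟩ ⟨hx, -⟩
  obtain ⟨K, hK⟩ := hbdd x hx
  obtain ⟨U, hU, hUK⟩ := hK.exists_mem
  have hcont : ContinuousOn (fun p : X × E => S p.1 p.2) ((U ∩ s) ×ˢ univ) :=
    continuousOn_prod_of_continuousOn_lipschitzOnWith' (fun p : X × E => S p.1 p.2) K.toNNReal
      (fun y hy => ((S y).lipschitz.weaken
        ((hUK y hy.1 hy.2).trans (le_max_left _ _))).lipschitzOnWith)
      (fun w _ => (hS w).mono inter_subset_right)
  refine (hcont (x, w) ⟨⟨mem_of_mem_nhds hU, hx⟩, mem_univ w⟩).mono_of_mem_nhdsWithin ?_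
  rw [inter_comm, inter_prod]
  exact inter_mem_nhdsWithin _ (prod_mem_nhds hU (univ_mem (f := 𝓝 w)))

theorem intervalIntegrable_sub_rpow_neg {α : ℝ} (hα : α < 1) (t a b : ℝ) :
    IntervalIntegrable (fun s => (t - s) ^ (-α)) volume a b := by
  simpa using
    (intervalIntegrable_rpow' (r := -α) (by linarith) (a := t - a) (b := t - b)).comp_sub_left t

theorem integral_sub_rpow_neg {α : ℝ} (hα : α < 1) (a t : ℝ) :
    ∫ s in a..t, (t - s) ^ (-α) = (t - a) ^ (1 - α) / (1 - α) := by
  rw [integral_comp_sub_left (fun x => x ^ (-α)), sub_self, integral_rpow (Or.inl (by linarith)),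
    Real.zero_rpow (by linarith), neg_add_eq_sub]
  ring

section Convolution

variable {V W : Type*} [NormedAddCommGroup V] [NormedSpace ℝ V]
  [NormedAddCommGroup W] [NormedSpace ℝ W]
  {S : ℝ → W →L[ℝ] V} {t C α : ℝ}

theorem intervalIntegrable_apply_sub (hα : α < 1) (ht : 0 ≤ t)
    (hScont : ∀ w, ContinuousOn (fun τ => S τ w) (Ioc 0 t))
    (hS : ∀ τ ∈ Ioc 0 t, ‖S τ‖ ≤ C * τ ^ (-α)) {G : ℝ → W} (hG : ContinuousOn G (Icc 0 t)) :
    IntervalIntegrable (fun s => S (t - s) (G s)) volume 0 t := by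
  have hbdd : ∀ τ ∈ Ioc 0 t, ∃ K, ∀ᶠ σ in 𝓝 τ, σ ∈ Ioc 0 t → ‖S σ‖ ≤ K := fun τ hτ =>
    ⟨C * τ ^ (-α) + 1, (continuousAt_const.mul (Real.continuousAt_rpow_const τ (-α)
      (Or.inl hτ.1.ne'))).eventually_lt continuousAt_const (lt_add_one _) |>.mono
        fun σ hσ hσt => (hS σ hσt).trans hσ.le⟩
  have hcont : ContinuousOn (fun s => S (t - s) (G s)) (Ioo 0 t) :=
    (continuousOn_apply_of_locally_bounded hScont hbdd).comp
      ((continuous_const.sub continuous_id).continuousOn.prodMk (hG.mono Ioo_subset_Icc_self))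
      fun s hs => ⟨⟨sub_pos.2 hs.2, sub_le_self _ hs.1.le⟩, mem_univ _⟩
  rw [intervalIntegrable_iff_integrableOn_Ioo_of_le ht]
  have hdom : IntegrableOn (fun s => C * ((t - s) ^ (-α) * ‖G s‖)) (Ioo 0 t) := by
    rw [← intervalIntegrable_iff_integrableOn_Ioo_of_le ht]
    refine ((intervalIntegrable_sub_rpow_neg hα t 0 t).mul_continuousOn ?_).const_mul C
    rw [uIcc_of_le ht]
    exact hG.norm
  refine hdom.mono' (hcont.aestronglyMeasurable measurableSet_Ioo)
    (ae_restrict_of_forall_mem measurableSet_Ioo fun s hs => ?_)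
  rw [← mul_assoc]
  exact (S (t - s)).le_of_opNorm_le (hS _ ⟨sub_pos.2 hs.2, sub_le_self _ hs.1.le⟩) _

theorem norm_integral_apply_sub_le (hα : α < 1) (ht : 0 ≤ t)
    (hS : ∀ τ ∈ Ioc 0 t, ‖S τ‖ ≤ C * τ ^ (-α)) {G : ℝ → W} {g : ℝ → ℝ}
    (hg : ContinuousOn g (Icc 0 t)) (hGg : ∀ s ∈ Icc 0 t, ‖G s‖ ≤ g s) :
    ‖∫ s in 0..t, S (t - s) (G s)‖ ≤ C * ∫ s in 0..t, (t - s) ^ (-α) * g s := by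
  rw [← intervalIntegral.integral_const_mul]
  -- `S 0` is not controlled, so the endpoint `s = t` is discarded as a null set.
  refine norm_integral_le_of_norm_le ht ((Ioo_ae_eq_Ioc (a := 0) (b := t)).mono
    fun s hs hsIoc => ?_) ?_
  · have hs' : s ∈ Ioo 0 t := Eq.mpr hs hsIoc
    have hSs := hS _ ⟨sub_pos.2 hs'.2, sub_le_self _ hs'.1.le⟩
    calc ‖S (t - s) (G s)‖ ≤ C * (t - s) ^ (-α) * ‖G s‖ := (S (t - s)).le_of_opNorm_le hSs _
      _ ≤ C * ((t - s) ^ (-α) * g s) := by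
        rw [← mul_assoc]
        exact mul_le_mul_of_nonneg_left (hGg s (Ioo_subset_Icc_self hs'))
          ((norm_nonneg _).trans hSs)
  · refine ((intervalIntegrable_sub_rpow_neg hα t 0 t).mul_continuousOn ?_).const_mul C
    rwa [uIcc_of_le ht]

theorem norm_integral_apply_sub_sub_le (hα : α < 1) (ht : 0 ≤ t)
    (hScont : ∀ w, ContinuousOn (fun τ => S τ w) (Ioc 0 t))
    (hS : ∀ τ ∈ Ioc 0 t, ‖S τ‖ ≤ C * τ ^ (-α)) {G₁ G₂ : ℝ → W}
    (hG₁ : ContinuousOn G₁ (Icc 0 t)) (hG₂ : ContinuousOn G₂ (Icc 0 t)) {g : ℝ → ℝ}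
    (hg : ContinuousOn g (Icc 0 t)) (hGg : ∀ s ∈ Icc 0 t, ‖G₁ s - G₂ s‖ ≤ g s) :
    ‖(∫ s in 0..t, S (t - s) (G₁ s)) - ∫ s in 0..t, S (t - s) (G₂ s)‖ ≤
      C * ∫ s in 0..t, (t - s) ^ (-α) * g s := by
  rw [← integral_sub (intervalIntegrable_apply_sub hα ht hScont hS hG₁)
    (intervalIntegrable_apply_sub hα ht hScont hS hG₂)]
  simp_rw [← map_sub]
  exact norm_integral_apply_sub_le hα ht hS hg hGg

end Convolution

theorem Icc_zero_subset_of_forall_extend {P : Set ℝ} {T δ : ℝ} (hδ : 0 < δ) (h0 : 0 ∈ P)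
    (hstep : ∀ a b, 0 ≤ a → a ≤ b → b ≤ T → b ≤ a + δ → Icc 0 a ⊆ P → Icc 0 b ⊆ P) :
    Icc 0 T ⊆ P := by
  rcases lt_or_ge T 0 with hT | hT
  · simp [Icc_eq_empty_of_lt hT]
  have hind : ∀ n : ℕ, Icc 0 (min (n * δ) T) ⊆ P := by
    intro n
    induction n with
    | zero => simpa [min_eq_left hT] using h0
    | succ n ih =>
      refine hstep _ _ (le_min (by positivity) hT)
        (min_le_min_right _ (by push_cast; linarith)) (min_le_right _ _) ?_ ih
      rw [← min_add_add_right]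
      exact min_le_min (by push_cast; linarith) (by linarith)
  obtain ⟨n, hn⟩ := exists_nat_ge (T / δ)
  simpa [min_eq_right ((div_le_iff₀ hδ).1 hn)] using hind n

theorem integral_rpow_neg_mul_le {φ : ℝ → ℝ} {a t M α : ℝ} (hα : α < 1) (ha : 0 ≤ a)
    (hat : a ≤ t) (hφ : ContinuousOn φ (Icc 0 t)) (hzero : ∀ s ∈ Icc 0 a, φ s = 0)
    (hM : ∀ s ∈ Icc a t, φ s ≤ M) :
    ∫ s in 0..t, (t - s) ^ (-α) * φ s ≤ M * ((t - a) ^ (1 - α) / (1 - α)) := by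
  have hint : ∀ b c, 0 ≤ b → b ≤ c → c ≤ t →
      IntervalIntegrable (fun s => (t - s) ^ (-α) * φ s) volume b c := fun b c hb hbc hct =>
    (intervalIntegrable_sub_rpow_neg hα t b c).mul_continuousOn
      (hφ.mono (by rw [uIcc_of_le hbc]; exact Icc_subset_Icc hb hct))
  have hvanish : ∫ s in 0..a, (t - s) ^ (-α) * φ s = 0 := by
    refine (integral_congr (g := fun _ => (0 : ℝ)) fun s hs => ?_).trans integral_zero
    rw [uIcc_of_le ha] at hs
    simp [hzero s hs]
  rw [← integral_add_adjacent_intervals (hint 0 a le_rfl ha hat) (hint a t ha hat le_rfl),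
    hvanish, zero_add]
  calc ∫ s in a..t, (t - s) ^ (-α) * φ s ≤ ∫ s in a..t, M * (t - s) ^ (-α) :=
        integral_mono_on hat (hint a t ha hat le_rfl)
          ((intervalIntegrable_sub_rpow_neg hα t a t).const_mul M) fun s hs => by
            rw [mul_comm M]
            exact mul_le_mul_of_nonneg_left (hM s hs) (Real.rpow_nonneg (sub_nonneg.2 hs.2) _)
    _ = M * ((t - a) ^ (1 - α) / (1 - α)) := by
        rw [intervalIntegral.integral_const_mul, integral_sub_rpow_neg hα]

theorem eq_zero_of_le_mul_integral_rpow_neg {φ : ℝ → ℝ} {T K α : ℝ} (hα : α < 1) (hK : 0 ≤ K)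
    (hφ : ContinuousOn φ (Icc 0 T)) (hφ0 : ∀ t ∈ Icc 0 T, 0 ≤ φ t)
    (hle : ∀ t ∈ Icc 0 T, φ t ≤ K * ∫ s in 0..t, (t - s) ^ (-α) * φ s) :
    ∀ t ∈ Icc 0 T, φ t = 0 := by
  have h1α : 0 < 1 - α := sub_pos.2 hα
  obtain ⟨δ, hδK, hδ⟩ : ∃ δ, K * (δ ^ (1 - α) / (1 - α)) ≤ 1 / 2 ∧ 0 < δ := by
    have hlim : Tendsto (fun δ : ℝ => K * (δ ^ (1 - α) / (1 - α))) (𝓝[>] 0) (𝓝 0) := by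
      have hcont : ContinuousAt (fun δ : ℝ => K * (δ ^ (1 - α) / (1 - α))) 0 :=
        continuousAt_const.mul
          ((Real.continuousAt_rpow_const 0 (1 - α) (Or.inr h1α.le)).div_const (1 - α))
      simpa [Real.zero_rpow h1α.ne'] using hcont.tendsto.mono_left nhdsWithin_le_nhds
    exact ((hlim.eventually (ge_mem_nhds one_half_pos)).and self_mem_nhdsWithin).exists
  intro t ht
  refine Icc_zero_subset_of_forall_extend (P := {t | t ∈ Icc 0 T → φ t = 0}) hδ
    (fun h0 => le_antisymm (by simpa using hle 0 h0) (hφ0 0 h0)) ?_ ht ht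
  intro a b ha hab hbT hbδ hPa
  have hzero : ∀ s ∈ Icc 0 a, φ s = 0 := fun s hs => hPa hs ⟨hs.1, hs.2.trans (hab.trans hbT)⟩
  obtain ⟨u, hu, hmax⟩ := isCompact_Icc.exists_isMaxOn (nonempty_Icc.2 hab)
    (hφ.mono (Icc_subset_Icc ha hbT))
  have huT : u ∈ Icc 0 T := ⟨ha.trans hu.1, hu.2.trans hbT⟩
  have hφu : φ u ≤ 0 := by
    have hI := integral_rpow_neg_mul_le hα ha hu.1 (hφ.mono (Icc_subset_Icc_right huT.2)) hzero
      fun s hs => hmax ⟨hs.1, hs.2.trans hu.2⟩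
    have hcontract : K * ((u - a) ^ (1 - α) / (1 - α)) ≤ 1 / 2 :=
      le_trans (by gcongr <;> linarith [hu.1, hu.2]) hδK
    nlinarith [hle u huT, hφ0 u huT]
  intro s hs hsT
  rcases le_total s a with hsa | hsa
  · exact hzero s ⟨hs.1, hsa⟩
  · exact le_antisymm ((hmax ⟨hsa, hs.2⟩).trans hφu) (hφ0 s hsT)

theorem stmt_1_general
    {V W : Type*} [NormedAddCommGroup V] [NormedSpace ℝ V]
    [NormedAddCommGroup W] [NormedSpace ℝ W]
    (T : ℝ)
    (α : ℝ) (hα1 : α < 1)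
    (S : ℝ → W →L[ℝ] V)
    (hScont : ∀ w : W, ContinuousOn (fun t => S t w) (Ioc 0 T))
    (hSbound : ∃ C : ℝ, ∀ t ∈ Ioc (0:ℝ) T, t ^ α * ‖S t‖ ≤ C)
    (F : V → W)
    (hF : ∀ r : ℝ, 0 < r → ∃ L : ℝ, ∀ v w : V, ‖v‖ ≤ r → ‖w‖ ≤ r →
      ‖F v - F w‖ ≤ L * ‖v - w‖)
    (O : ℝ → V)
    (X Y : ℝ → V)
    (hXcont : ContinuousOn X (Icc 0 T)) (hYcont : ContinuousOn Y (Icc 0 T))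
    (hXeq : ∀ t ∈ Icc (0:ℝ) T, X t = (∫ s in (0:ℝ)..t, S (t - s) (F (X s))) + O t)
    (hYeq : ∀ t ∈ Icc (0:ℝ) T, Y t = (∫ s in (0:ℝ)..t, S (t - s) (F (Y s))) + O t) :
    ∀ t ∈ Icc (0:ℝ) T, X t = Y t := by
  obtain ⟨C, hC⟩ := hSbound
  obtain ⟨rX, hrX⟩ := isCompact_Icc.exists_bound_of_continuousOn hXcont
  obtain ⟨rY, hrY⟩ := isCompact_Icc.exists_bound_of_continuousOn hYcont
  obtain ⟨L, hL⟩ := exists_lipschitzOnWith_closedBall hF (max rX rY)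
  have hXr : MapsTo X (Icc 0 T) (Metric.closedBall 0 (max rX rY)) := fun s hs =>
    mem_closedBall_zero_iff.2 ((hrX s hs).trans (le_max_left _ _))
  have hYr : MapsTo Y (Icc 0 T) (Metric.closedBall 0 (max rX rY)) := fun s hs =>
    mem_closedBall_zero_iff.2 ((hrY s hs).trans (le_max_right _ _))
  suffices h : ∀ t ∈ Icc 0 T, ‖X t - Y t‖ = 0 from
    fun t ht => sub_eq_zero.1 (norm_eq_zero.1 (h t ht))
  refine eq_zero_of_le_mul_integral_rpow_neg hα1 (K := max C 0 * L) (by positivity)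
    (hXcont.sub hYcont).norm (fun _ _ => norm_nonneg _) fun t ht => ?_
  have hsub : Icc 0 t ⊆ Icc 0 T := Icc_subset_Icc_right ht.2
  have hS : ∀ τ ∈ Ioc 0 t, ‖S τ‖ ≤ max C 0 * τ ^ (-α) := fun τ hτ =>
    le_mul_rpow_neg_of_rpow_mul_le hτ.1 ((hC τ (Ioc_subset_Ioc_right ht.2 hτ)).trans
      (le_max_left _ _))
  calc ‖X t - Y t‖
      = ‖(∫ s in 0..t, S (t - s) (F (X s))) - ∫ s in 0..t, S (t - s) (F (Y s))‖ := by
        rw [hXeq t ht, hYeq t ht, add_sub_add_right_eq_sub]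
    _ ≤ max C 0 * ∫ s in 0..t, (t - s) ^ (-α) * (L * ‖X s - Y s‖) :=
        norm_integral_apply_sub_sub_le hα1 ht.1
          (fun w => (hScont w).mono (Ioc_subset_Ioc_right ht.2)) hS
          ((hL.continuousOn.comp hXcont hXr).mono hsub)
          ((hL.continuousOn.comp hYcont hYr).mono hsub)
          (continuousOn_const.mul ((hXcont.sub hYcont).norm.mono hsub)) fun s hs => by
            simpa only [Function.comp_apply, dist_eq_norm] using
              hL.dist_le_mul _ (hXr (hsub hs)) _ (hYr (hsub hs))
    _ = max C 0 * L * ∫ s in 0..t, (t - s) ^ (-α) * ‖X s - Y s‖ := by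
        simp_rw [mul_left_comm _ (L : ℝ), intervalIntegral.integral_const_mul, mul_assoc]

/-- **pathwise uniqueness.** In the abstract setting (semigroup `S` with
`sup_{t∈(0,T]} t^α ‖S_t‖ < ∞`, nonlinearity `F` Lipschitz on bounded sets, continuous
forcing `O`), any two continuous functions `X, Y : [0,T] → V` satisfying
`X_t = ∫_0^t S_{t−s} F(X_s) ds + O_t` and `Y_t = ∫_0^t S_{t−s} F(Y_s) ds + O_t`
coincide on `[0,T]`. -/
theorem stmt_1
    {V W : Type*} [NormedAddCommGroup V] [NormedSpace ℝ V] [CompleteSpace V]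
    [NormedAddCommGroup W] [NormedSpace ℝ W]
    (T : ℝ) (hT : 0 < T)
    (α : ℝ) (hα0 : 0 ≤ α) (hα1 : α < 1)
    (S : ℝ → W →L[ℝ] V)
    (hScont : ∀ w : W, ContinuousOn (fun t => S t w) (Ioc 0 T))
    (hSbound : ∃ C : ℝ, ∀ t ∈ Ioc (0:ℝ) T, t ^ α * ‖S t‖ ≤ C)
    (F : V → W)
    (hF : ∀ r : ℝ, 0 < r → ∃ L : ℝ, ∀ v w : V, ‖v‖ ≤ r → ‖w‖ ≤ r →
      ‖F v - F w‖ ≤ L * ‖v - w‖)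
    (O : ℝ → V) (hO : ContinuousOn O (Icc 0 T))
    (X Y : ℝ → V)
    (hXcont : ContinuousOn X (Icc 0 T)) (hYcont : ContinuousOn Y (Icc 0 T))
    (hXeq : ∀ t ∈ Icc (0:ℝ) T, X t = (∫ s in (0:ℝ)..t, S (t - s) (F (X s))) + O t)
    (hYeq : ∀ t ∈ Icc (0:ℝ) T, Y t = (∫ s in (0:ℝ)..t, S (t - s) (F (Y s))) + O t) :
    ∀ t ∈ Icc (0:ℝ) T, X t = Y t :=
  stmt_1_general T α hα1 S hScont hSbound F hF O X Y hXcont hYcont hXeq hYeq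
end

section
/- Let T ∈ (0,∞). For every t ∈ (0,T] and every w ∈ L²((0,1),ℝ) the series (S_t w)(x) = ∑_{n=1}^∞ 2 e^{−n²π²t} (∫_0^1 w(s) sin(nπs) ds) sin(nπx) converges and defines a continuous function S_t w ∈ C([0,1],ℝ), and for every γ ∈ [0,1/2), every t ∈ (0,T], every N ∈ ℕ and every w ∈ L²((0,1),ℝ) one has ‖S_t w‖_∞ ≤ 10 (T+3) t^{−3/4} ‖w‖_{H^{−1}} and ‖S_t w − P_N(S_t w)‖_∞ ≤ 10 (T+3) t^{−(3/4 + γ/2)} N^{−γ} ‖w‖_{H^{−1}}. -/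
open MeasureTheory Real

noncomputable section

/-- The `n`-th sine Fourier coefficient `∫_0^1 w(x) sin(nπx) dx` (with the index
shift `n ↦ n+1`, so that the modes are `n = 1, 2, …`). -/
def sinCoeff (w : ℝ → ℝ) (n : ℕ) : ℝ :=
  ∫ x in (0:ℝ)..1, w x * Real.sin (((n:ℝ) + 1) * Real.pi * x)

/-- The Dirichlet heat semigroup on `(0,1)`:
`(S_t w)(x) = ∑_{n=1}^∞ 2 e^{−n²π²t} (∫_0^1 w(s) sin(nπs) ds) sin(nπx)`. -/
def heat1 (t : ℝ) (w : ℝ → ℝ) (x : ℝ) : ℝ :=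
  ∑' n : ℕ, 2 * Real.exp (-((n:ℝ) + 1) ^ 2 * Real.pi ^ 2 * t) * sinCoeff w n *
    Real.sin (((n:ℝ) + 1) * Real.pi * x)

/-- The spectral projection `(P_N v)(x) = ∑_{n=1}^N 2 (∫_0^1 sin(nπs) v(s) ds) sin(nπx)`. -/
def P1 (N : ℕ) (v : ℝ → ℝ) (x : ℝ) : ℝ :=
  ∑ n ∈ Finset.range N, 2 * sinCoeff v n * Real.sin (((n:ℝ) + 1) * Real.pi * x)

/-- The `H^{−1}((0,1),ℝ)` norm, expressed in the sine basis:
`‖w‖_{H^{−1}} = (∑_{n=1}^∞ 2 (nπ)^{−2} |∫_0^1 w(x) sin(nπx) dx|²)^{1/2}`. -/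
def Hm1norm (w : ℝ → ℝ) : ℝ :=
  Real.sqrt (∑' n : ℕ, 2 * ((((n:ℝ) + 1) * Real.pi)⁻¹) ^ 2 * (sinCoeff w n) ^ 2)

end

/-! The sine coefficients of `S_t w` are `2 e^{-n²π²t} a_n` with `a_n = ∫_0^1 w(s) sin(nπs) ds`,
and the series converges absolutely, so it may be integrated term by term: `P_N (S_t w)` is its
`N`-th partial sum, and both sup-norm bounds reduce to bounding `∑_{n>N} 2 e^{-n²π²t} |a_n|`.
Cauchy–Schwarz against the `H^{-1}` weights `(nπ)^{-1}` leaves `∑_{n>N} 2 (nπ)² e^{-2n²π²t}`.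
Writing `y = n² ≥ N²`, the bound `y e^{-π²t y} ≤ (π²t)^{-(1+γ)} y^{-γ}` extracts `N^{-2γ}`, and the
remaining Gaussian sum `∑ e^{-π²t n²}` is at most `∫_0^∞ e^{-π²t x²} dx ≤ t^{-1/2}/2`. -/

theorem rpow_mul_exp_neg_le_one {p x : ℝ} (hp0 : 0 ≤ p) (hp2 : p ≤ 2) (hx : 0 ≤ x) :
    x ^ p * exp (-x) ≤ 1 := by
  rw [exp_neg, mul_inv_le_iff₀ (exp_pos x), one_mul]
  rcases le_total x 1 with hx1 | hx1
  · exact (rpow_le_one hx hx1 hp0).trans (one_le_exp hx)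
  · -- `x ≤ 1 + x/2 + (x/2)²/2` since the discriminant of the difference is negative
    have hhalf : x ≤ exp (x / 2) := by
      nlinarith [quadratic_le_exp_of_nonneg (by positivity : (0:ℝ) ≤ x / 2)]
    calc x ^ p ≤ x ^ (2 : ℝ) := rpow_le_rpow_of_exponent_le hx1 hp2
      _ = x ^ 2 := rpow_two x
      _ ≤ exp (x / 2) ^ 2 := pow_le_pow_left₀ hx hhalf 2
      _ = exp x := by rw [← exp_nat_mul]; ring_nf

theorem mul_exp_neg_mul_le {b y γ : ℝ} (hb : 0 < b) (hy : 0 < y) (hγ0 : 0 ≤ γ) (hγ1 : γ ≤ 1) :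
    y * exp (-(b * y)) ≤ b ^ (-(1 + γ)) * y ^ (-γ) := by
  have hsplit : y = (b * y) ^ (1 + γ) * (b ^ (-(1 + γ)) * y ^ (-γ)) := by
    rw [mul_rpow hb.le hy.le, rpow_neg hb.le, rpow_neg hy.le]
    field_simp
    rw [rpow_add hy, rpow_one]
  calc y * exp (-(b * y))
      = (b * y) ^ (1 + γ) * exp (-(b * y)) * (b ^ (-(1 + γ)) * y ^ (-γ)) := by
        nth_rewrite 1 [hsplit]; ring
    _ ≤ 1 * (b ^ (-(1 + γ)) * y ^ (-γ)) := by
        gcongr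
        exact rpow_mul_exp_neg_le_one (by linarith) (by linarith) (by positivity)
    _ = b ^ (-(1 + γ)) * y ^ (-γ) := one_mul _

theorem sum_range_exp_neg_mul_sq_succ_le {b : ℝ} (hb : 0 < b) (n : ℕ) :
    ∑ i ∈ Finset.range n, exp (-b * ((i : ℝ) + 1) ^ 2) ≤ √(π / b) / 2 := by
  have hanti : AntitoneOn (fun x : ℝ => exp (-b * x ^ 2)) (Set.Icc 0 (0 + n)) := by
    intro x hx y hy hxy
    simp only [exp_le_exp]
    nlinarith [hx.1, mul_le_mul hxy hxy hx.1 (hx.1.trans hxy)]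
  calc ∑ i ∈ Finset.range n, exp (-b * ((i : ℝ) + 1) ^ 2)
      ≤ ∫ x in (0 : ℝ)..0 + n, exp (-b * x ^ 2) := by
        simpa [add_comm] using hanti.sum_le_integral
    _ ≤ ∫ x in Set.Ioi (0 : ℝ), exp (-b * x ^ 2) := by
        rw [intervalIntegral.integral_of_le (by positivity)]
        exact setIntegral_mono_set (integrable_exp_neg_mul_sq hb).integrableOn
          (Filter.Eventually.of_forall fun x => (exp_pos _).le) Set.Ioc_subset_Ioi_self.eventuallyLE
    _ = √(π / b) / 2 := integral_gaussian_Ioi b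

theorem summable_mul_and_tsum_mul_le_sqrt_mul_sqrt {ι : Type*} {f g : ι → ℝ}
    (hf : Summable fun i => f i ^ 2) (hg : Summable fun i => g i ^ 2) :
    (Summable fun i => f i * g i) ∧ ∑' i, f i * g i ≤ √(∑' i, f i ^ 2) * √(∑' i, g i ^ 2) := by
  have hfg : Summable fun i => f i * g i := by
    refine ((hf.add hg).div_const 2).of_norm_bounded fun i => ?_
    rw [norm_mul, Real.norm_eq_abs, Real.norm_eq_abs, ← sq_abs (f i), ← sq_abs (g i)]
    linarith [two_mul_le_add_sq |f i| |g i|]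
  refine ⟨hfg, hfg.tsum_le_of_sum_le fun s => (Real.sum_mul_le_sqrt_mul_sqrt s f g).trans ?_⟩
  gcongr
  · exact hf.sum_le_tsum s fun i _ => sq_nonneg _
  · exact hg.sum_le_tsum s fun i _ => sq_nonneg _

theorem integral_cos_int_mul_pi_mul (k : ℤ) :
    ∫ x in (0 : ℝ)..1, cos (k * π * x) = if k = 0 then 1 else 0 := by
  split_ifs with hk
  · simp [hk]
  · have hkπ : (k : ℝ) * π ≠ 0 := mul_ne_zero (Int.cast_ne_zero.mpr hk) pi_ne_zero
    rw [intervalIntegral.integral_comp_mul_left (fun x => cos x) hkπ]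
    simp [integral_cos, sin_int_mul_pi]

theorem integral_sin_mul_sin (n j : ℕ) :
    ∫ x in (0 : ℝ)..1, sin (((n : ℝ) + 1) * π * x) * sin (((j : ℝ) + 1) * π * x) =
      if n = j then 1 / 2 else 0 := by
  have hprod : ∀ x : ℝ, sin (((n : ℝ) + 1) * π * x) * sin (((j : ℝ) + 1) * π * x) =
      (cos (((n - j : ℤ) : ℝ) * π * x) - cos (((n + j + 2 : ℤ) : ℝ) * π * x)) / 2 := by
    intro x
    have h₁ : ((n - j : ℤ) : ℝ) * π * x = ((n : ℝ) + 1) * π * x - ((j : ℝ) + 1) * π * x := by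
      push_cast; ring
    have h₂ : ((n + j + 2 : ℤ) : ℝ) * π * x = ((n : ℝ) + 1) * π * x + ((j : ℝ) + 1) * π * x := by
      push_cast; ring
    rw [h₁, h₂, cos_sub, cos_add]
    ring
  simp_rw [hprod]
  rw [intervalIntegral.integral_div,
    intervalIntegral.integral_sub (Continuous.intervalIntegrable (by fun_prop) _ _)
      (Continuous.intervalIntegrable (by fun_prop) _ _),
    integral_cos_int_mul_pi_mul, integral_cos_int_mul_pi_mul,
    if_neg (show (n + j + 2 : ℤ) ≠ 0 by omega)]
  simp only [sub_eq_zero, Nat.cast_inj]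
  split_ifs <;> norm_num

theorem norm_mul_sin_le (a θ : ℝ) : ‖a * sin θ‖ ≤ |a| := by
  rw [norm_mul, norm_eq_abs, norm_eq_abs]
  exact mul_le_of_le_one_right (abs_nonneg a) (abs_sin_le_one θ)

noncomputable def sineSeries (c : ℕ → ℝ) (x : ℝ) : ℝ :=
  ∑' n, c n * sin (((n : ℝ) + 1) * π * x)

section SineSeries

variable {c : ℕ → ℝ}

theorem summable_sineSeries (hc : Summable fun n => |c n|) (x : ℝ) :
    Summable fun n => c n * sin (((n : ℝ) + 1) * π * x) :=
  hc.of_norm_bounded fun _ => norm_mul_sin_le _ _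

theorem continuous_sineSeries (hc : Summable fun n => |c n|) : Continuous (sineSeries c) :=
  continuous_tsum (fun _ => by fun_prop) hc fun _ _ => norm_mul_sin_le _ _

theorem abs_sineSeries_sub_sum_range_le (hc : Summable fun n => |c n|) (N : ℕ) (x : ℝ) :
    |sineSeries c x - ∑ n ∈ Finset.range N, c n * sin (((n : ℝ) + 1) * π * x)| ≤
      ∑' n, |c (n + N)| := by
  rw [sineSeries, ← (summable_sineSeries hc x).sum_add_tsum_nat_add N, add_sub_cancel_left,
    ← norm_eq_abs]
  exact tsum_of_norm_bounded ((summable_nat_add_iff N).mpr hc).hasSum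
    fun _ => norm_mul_sin_le _ _

theorem sinCoeff_sineSeries (hc : Summable fun n => |c n|) (j : ℕ) :
    sinCoeff (sineSeries c) j = c j / 2 := by
  have hsum := intervalIntegral.hasSum_integral_of_dominated_convergence (μ := volume)
    (a := 0) (b := 1) (fun n _ => |c n|)
    (F := fun n x => c n * sin (((n : ℝ) + 1) * π * x) * sin (((j : ℝ) + 1) * π * x))
    (f := fun x => sineSeries c x * sin (((j : ℝ) + 1) * π * x))
    (fun _ => (by fun_prop : Continuous _).aestronglyMeasurable)
    (fun _ => ae_of_all _ fun _ _ =>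
      (norm_mul_sin_le _ _).trans ((norm_eq_abs _).symm.trans_le (norm_mul_sin_le _ _)))
    (ae_of_all _ fun _ _ => hc) intervalIntegrable_const
    (ae_of_all _ fun x _ => (summable_sineSeries hc x).hasSum.mul_right _)
  have hintegrals : (fun n => ∫ x in (0 : ℝ)..1,
      c n * sin (((n : ℝ) + 1) * π * x) * sin (((j : ℝ) + 1) * π * x)) =
      fun n => if n = j then c j / 2 else 0 := by
    funext n
    simp_rw [mul_assoc (c n)]
    rw [intervalIntegral.integral_const_mul, integral_sin_mul_sin]
    split_ifs with h
    · subst h; ring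
    · ring
  rw [hintegrals] at hsum
  exact hsum.unique (hasSum_ite_eq j _)

theorem P1_sineSeries (hc : Summable fun n => |c n|) (N : ℕ) (x : ℝ) :
    P1 N (sineSeries c) x = ∑ n ∈ Finset.range N, c n * sin (((n : ℝ) + 1) * π * x) := by
  simp only [P1, sinCoeff_sineSeries hc]
  congr 1 with n
  ring

end SineSeries

theorem MeasureTheory.MemLp.intervalIntegrable_Ioo {w : ℝ → ℝ} {a b : ℝ} (hab : a ≤ b)
    {p : ENNReal} (hp : 1 ≤ p) (hw : MemLp w p (volume.restrict (Set.Ioo a b))) :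
    IntervalIntegrable w volume a b := by
  have : IsFiniteMeasure (volume.restrict (Set.Ioo a b)) := by
    rw [isFiniteMeasure_restrict]; exact measure_Ioo_lt_top.ne
  exact (intervalIntegrable_iff_integrableOn_Ioo_of_le hab).mpr (hw.integrable hp)

theorem abs_sinCoeff_le {w : ℝ → ℝ} (hw : IntervalIntegrable w volume 0 1) (n : ℕ) :
    |sinCoeff w n| ≤ ∫ x in (0 : ℝ)..1, |w x| := by
  rw [sinCoeff, ← norm_eq_abs]
  refine (intervalIntegral.norm_integral_le_integral_norm zero_le_one).trans
    (intervalIntegral.integral_mono_on zero_le_one ?_ hw.abs fun x _ => ?_)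
  · exact (hw.mul_continuousOn (by fun_prop)).norm
  · rw [← norm_eq_abs]
    exact (norm_mul_sin_le _ _).trans_eq (norm_eq_abs _).symm

theorem summable_Hm1norm_series {w : ℝ → ℝ} (hw : IntervalIntegrable w volume 0 1) :
    Summable fun n : ℕ => 2 * ((((n : ℝ) + 1) * π)⁻¹) ^ 2 * sinCoeff w n ^ 2 := by
  set C := ∫ x in (0 : ℝ)..1, |w x|
  have hinv : Summable fun n : ℕ => ((((n : ℝ) + 1) * π)⁻¹) ^ 2 := by
    have h := ((summable_nat_add_iff 1).mpr (Real.summable_nat_pow_inv.mpr one_lt_two)).mul_right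
      ((π ^ 2)⁻¹)
    refine h.congr fun n => ?_
    push_cast
    rw [mul_inv, mul_pow, inv_pow, inv_pow]
  refine (hinv.mul_left (2 * C ^ 2)).of_nonneg_of_le (fun n => by positivity) fun n => ?_
  have hsq : sinCoeff w n ^ 2 ≤ C ^ 2 := by
    rw [← sq_abs]
    exact pow_le_pow_left₀ (abs_nonneg _) (abs_sinCoeff_le hw n) 2
  calc 2 * ((((n : ℝ) + 1) * π)⁻¹) ^ 2 * sinCoeff w n ^ 2
      ≤ 2 * ((((n : ℝ) + 1) * π)⁻¹) ^ 2 * C ^ 2 := by gcongr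
    _ = 2 * C ^ 2 * ((((n : ℝ) + 1) * π)⁻¹) ^ 2 := by ring

noncomputable def heatCoeff (t : ℝ) (a : ℕ → ℝ) (n : ℕ) : ℝ :=
  2 * exp (-((n : ℝ) + 1) ^ 2 * π ^ 2 * t) * a n

noncomputable def heatWeight (t : ℝ) (k : ℕ) : ℝ :=
  √2 * (((k : ℝ) + 1) * π) * exp (-((k : ℝ) + 1) ^ 2 * π ^ 2 * t)

theorem abs_heatCoeff_eq_mul_heatWeight (t : ℝ) (a : ℕ → ℝ) (n : ℕ) :
    |heatCoeff t a n| = √2 * ((((n : ℝ) + 1) * π)⁻¹ * |a n|) * heatWeight t n := by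
  have hm : ((n : ℝ) + 1) * π ≠ 0 := by positivity
  rw [heatCoeff, heatWeight, abs_mul, abs_mul, abs_of_pos (exp_pos _), abs_two]
  field_simp
  rw [Real.sq_sqrt zero_le_two]
  ring

theorem heatWeight_sq_le {t γ K : ℝ} (ht : 0 < t) (hγ0 : 0 ≤ γ) (hγ1 : γ ≤ 1) (hK : 0 < K)
    {k : ℕ} (hKk : K ≤ k + 1) :
    heatWeight t k ^ 2 ≤
      2 * π ^ 2 * t ^ (-(1 + γ)) * (K ^ 2) ^ (-γ) * exp (-(π ^ 2 * t) * ((k : ℝ) + 1) ^ 2) := by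
  have hsq : heatWeight t k ^ 2 = 2 * π ^ 2 * (((k : ℝ) + 1) ^ 2 *
      exp (-(π ^ 2 * t * ((k : ℝ) + 1) ^ 2))) * exp (-(π ^ 2 * t) * ((k : ℝ) + 1) ^ 2) := by
    rw [heatWeight, mul_pow, mul_pow, mul_pow, Real.sq_sqrt zero_le_two, sq (exp _),
      show -((k : ℝ) + 1) ^ 2 * π ^ 2 * t = -(π ^ 2 * t) * ((k : ℝ) + 1) ^ 2 by ring, neg_mul]
    ring
  set b := π ^ 2 * t
  set y := ((k : ℝ) + 1) ^ 2
  have hb : 0 < b := by positivity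
  have hy : 0 < y := by positivity
  have htb : t ≤ b := le_mul_of_one_le_left ht.le (one_le_pow₀ (by linarith [pi_gt_three]))
  have hKy : K ^ 2 ≤ y := pow_le_pow_left₀ hK.le hKk 2
  calc heatWeight t k ^ 2 = 2 * π ^ 2 * (y * exp (-(b * y))) * exp (-b * y) := hsq
    _ ≤ 2 * π ^ 2 * (b ^ (-(1 + γ)) * y ^ (-γ)) * exp (-b * y) := by
        gcongr 2 * π ^ 2 * ?_ * _
        exact mul_exp_neg_mul_le hb hy hγ0 hγ1
    _ ≤ 2 * π ^ 2 * (t ^ (-(1 + γ)) * (K ^ 2) ^ (-γ)) * exp (-b * y) := by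
        gcongr 2 * π ^ 2 * (?_ * ?_) * _
        · exact rpow_le_rpow_of_nonpos ht htb (by linarith)
        · exact rpow_le_rpow_of_nonpos (by positivity) hKy (by linarith)
    _ = _ := by ring

theorem summable_heatWeight_sq_tail_and_tsum_le {t γ K : ℝ} (ht : 0 < t) (hγ0 : 0 ≤ γ)
    (hγ1 : γ ≤ 1) (hK : 0 < K) {N : ℕ} (hKN : K ≤ N + 1) :
    (Summable fun n => heatWeight t (n + N) ^ 2) ∧
      ∑' n, heatWeight t (n + N) ^ 2 ≤ (π * t ^ (-(3 / 4 + γ / 2)) * K ^ (-γ)) ^ 2 := by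
  set b := π ^ 2 * t
  have hb : 0 < b := by positivity
  set C := 2 * π ^ 2 * t ^ (-(1 + γ)) * (K ^ 2) ^ (-γ)
  have hC : 0 ≤ C := by positivity
  have hgauss : Summable fun n : ℕ => exp (-b * ((n : ℝ) + 1) ^ 2) :=
    summable_of_sum_range_le (fun _ => (exp_pos _).le) (sum_range_exp_neg_mul_sq_succ_le hb)
  have hterm : ∀ n : ℕ, heatWeight t (n + N) ^ 2 ≤ C * exp (-b * ((n : ℝ) + 1) ^ 2) := by
    intro n
    refine (heatWeight_sq_le ht hγ0 hγ1 hK (by push_cast; linarith)).trans ?_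
    refine mul_le_mul_of_nonneg_left (exp_le_exp.mpr ?_) hC
    rw [neg_mul, neg_mul, neg_le_neg_iff]
    exact mul_le_mul_of_nonneg_left (by push_cast; gcongr; linarith) hb.le
  have hsum := (hgauss.mul_left C).of_nonneg_of_le (fun _ => sq_nonneg _) hterm
  refine ⟨hsum, (hsum.tsum_le_tsum hterm (hgauss.mul_left C)).trans ?_⟩
  have hsqrt : √(π / b) ≤ t ^ (-(1 / 2 : ℝ)) := by
    rw [rpow_neg ht.le, ← sqrt_eq_rpow, ← sqrt_inv]
    gcongr
    rw [div_le_iff₀ hb, inv_mul_eq_div, le_div_iff₀ ht]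
    nlinarith [pi_gt_three]
  have ht_pow : t ^ (-(1 + γ)) * t ^ (-(1 / 2 : ℝ)) = (t ^ (-(3 / 4 + γ / 2))) ^ 2 := by
    rw [← rpow_add ht, ← rpow_mul_natCast ht.le]
    ring_nf
  calc ∑' n : ℕ, C * exp (-b * ((n : ℝ) + 1) ^ 2) ≤ C * (√(π / b) / 2) := by
        rw [tsum_mul_left]
        gcongr
        exact Real.tsum_le_of_sum_range_le (fun _ => (exp_pos _).le)
          (sum_range_exp_neg_mul_sq_succ_le hb)
    _ ≤ C * (t ^ (-(1 / 2 : ℝ)) / 2) := by gcongr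
    _ = (π * t ^ (-(3 / 4 + γ / 2)) * K ^ (-γ)) ^ 2 := by
        rw [mul_pow, mul_pow, ← ht_pow, rpow_pow_comm hK.le]
        ring

theorem summable_abs_heatCoeff_tail_and_tsum_le (a : ℕ → ℝ)
    (ha : Summable fun n : ℕ => 2 * ((((n : ℝ) + 1) * π)⁻¹) ^ 2 * a n ^ 2)
    {t γ K : ℝ} (ht : 0 < t) (hγ0 : 0 ≤ γ) (hγ1 : γ ≤ 1) (hK : 0 < K) {N : ℕ}
    (hKN : K ≤ N + 1) :
    (Summable fun n => |heatCoeff t a (n + N)|) ∧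
      ∑' n, |heatCoeff t a (n + N)| ≤ π * t ^ (-(3 / 4 + γ / 2)) * K ^ (-γ) *
        √(∑' n : ℕ, 2 * ((((n : ℝ) + 1) * π)⁻¹) ^ 2 * a n ^ 2) := by
  set f : ℕ → ℝ := fun n => √2 * ((((n : ℝ) + 1) * π)⁻¹ * |a n|)
  have hf_sq : ∀ n, f n ^ 2 = 2 * ((((n : ℝ) + 1) * π)⁻¹) ^ 2 * a n ^ 2 := fun n => by
    rw [mul_pow, Real.sq_sqrt zero_le_two, mul_pow, sq_abs, mul_assoc]
  have hf_sum : Summable fun n => f (n + N) ^ 2 := by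
    simpa only [hf_sq] using (summable_nat_add_iff N).mpr ha
  have hf_le : ∑' n, f (n + N) ^ 2 ≤ ∑' n : ℕ, 2 * ((((n : ℝ) + 1) * π)⁻¹) ^ 2 * a n ^ 2 := by
    simp only [hf_sq]
    exact tsum_comp_le_tsum_of_inj ha (fun n => by positivity) (add_left_injective N)
  obtain ⟨hw_sum, hw_le⟩ := summable_heatWeight_sq_tail_and_tsum_le ht hγ0 hγ1 hK hKN
  obtain ⟨hsum, hle⟩ := summable_mul_and_tsum_mul_le_sqrt_mul_sqrt hf_sum hw_sum
  simp only [f, ← abs_heatCoeff_eq_mul_heatWeight] at hsum hle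
  refine ⟨hsum, hle.trans ?_⟩
  rw [mul_comm _ (√_)]
  gcongr
  calc √(∑' n, heatWeight t (n + N) ^ 2)
      ≤ √((π * t ^ (-(3 / 4 + γ / 2)) * K ^ (-γ)) ^ 2) := sqrt_le_sqrt hw_le
    _ = π * t ^ (-(3 / 4 + γ / 2)) * K ^ (-γ) := sqrt_sq (by positivity)

theorem stmt_7_general (T : ℝ) (w : ℝ → ℝ)
    (hw : MemLp w 2 (volume.restrict (Set.Ioo (0:ℝ) 1))) :
    ∀ t ∈ Set.Ioc (0:ℝ) T,
      (∀ x ∈ Set.Icc (0:ℝ) 1,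
        Summable fun n : ℕ => 2 * Real.exp (-((n:ℝ) + 1) ^ 2 * Real.pi ^ 2 * t) *
          sinCoeff w n * Real.sin (((n:ℝ) + 1) * Real.pi * x)) ∧
      ContinuousOn (heat1 t w) (Set.Icc (0:ℝ) 1) ∧
      (∀ x ∈ Set.Icc (0:ℝ) 1,
        |heat1 t w x| ≤ 10 * (T + 3) * t ^ (-(3/4 : ℝ)) * Hm1norm w) ∧
      (∀ γ : ℝ, 0 ≤ γ → γ < 1/2 → ∀ N : ℕ, 1 ≤ N → ∀ x ∈ Set.Icc (0:ℝ) 1,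
        |heat1 t w x - P1 N (heat1 t w) x| ≤
          10 * (T + 3) * t ^ (-(3/4 + γ/2)) * (N:ℝ) ^ (-γ) * Hm1norm w) := by
  rintro t ⟨ht, htT⟩
  have hS := summable_Hm1norm_series (hw.intervalIntegrable_Ioo zero_le_one one_le_two)
  have hheat : heat1 t w = sineSeries (heatCoeff t (sinCoeff w)) := rfl
  have hπ : π ≤ 10 * (T + 3) := by linarith [pi_lt_four]
  have htail₀ := summable_abs_heatCoeff_tail_and_tsum_le _ hS ht le_rfl zero_le_one one_pos
    (N := 0) (by simp)
  simp only [add_zero, zero_div, neg_zero, rpow_zero, mul_one] at htail₀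
  have hc := htail₀.1
  refine ⟨fun x _ => summable_sineSeries hc x, hheat ▸ (continuous_sineSeries hc).continuousOn,
    fun x _ => ?_, fun γ hγ0 hγ N hN x _ => ?_⟩
  · have h := abs_sineSeries_sub_sum_range_le hc 0 x
    simp only [Finset.range_zero, Finset.sum_empty, sub_zero, add_zero] at h
    rw [hheat, Hm1norm]
    refine h.trans (htail₀.2.trans ?_)
    gcongr
  · have hN' : (0 : ℝ) < N := by exact_mod_cast hN
    rw [hheat, P1_sineSeries hc, Hm1norm]
    have htail := summable_abs_heatCoeff_tail_and_tsum_le _ hS ht hγ0 (by linarith) hN'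
      (by linarith)
    refine (abs_sineSeries_sub_sum_range_le hc N x).trans (htail.2.trans ?_)
    gcongr

/-- **Lemma `BurgerSG`.** For every `t ∈ (0,T]` and `w ∈ L²((0,1),ℝ)`
the series defining `S_t w` converges and gives a continuous function on `[0,1]`, and
for every `γ ∈ [0,1/2)` and `N ∈ ℕ`:
`‖S_t w‖_∞ ≤ 10 (T+3) t^{−3/4} ‖w‖_{H^{−1}}` and
`‖S_t w − P_N(S_t w)‖_∞ ≤ 10 (T+3) t^{−(3/4+γ/2)} N^{−γ} ‖w‖_{H^{−1}}`
(sup-norm bounds stated pointwise on `[0,1]`). -/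
theorem stmt_7 (T : ℝ) (hT : 0 < T) (w : ℝ → ℝ)
    (hw : MemLp w 2 (volume.restrict (Set.Ioo (0:ℝ) 1))) :
    ∀ t ∈ Set.Ioc (0:ℝ) T,
      (∀ x ∈ Set.Icc (0:ℝ) 1,
        Summable fun n : ℕ => 2 * Real.exp (-((n:ℝ) + 1) ^ 2 * Real.pi ^ 2 * t) *
          sinCoeff w n * Real.sin (((n:ℝ) + 1) * Real.pi * x)) ∧
      ContinuousOn (heat1 t w) (Set.Icc (0:ℝ) 1) ∧
      (∀ x ∈ Set.Icc (0:ℝ) 1,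
        |heat1 t w x| ≤ 10 * (T + 3) * t ^ (-(3/4 : ℝ)) * Hm1norm w) ∧
      (∀ γ : ℝ, 0 ≤ γ → γ < 1/2 → ∀ N : ℕ, 1 ≤ N → ∀ x ∈ Set.Icc (0:ℝ) 1,
        |heat1 t w x - P1 N (heat1 t w) x| ≤
          10 * (T + 3) * t ^ (-(3/4 + γ/2)) * (N:ℝ) ^ (-γ) * Hm1norm w) :=
  stmt_7_general T w hw
end

section
/- Let T ∈ (0,∞). For every t ∈ (0,T] and every continuously differentiable function v : [0,1] → ℝ: ‖S_t(v')‖_{L²((0,1),ℝ)} ≤ 4 (t + 1) t^{−3/4} ‖v‖_{L¹((0,1),ℝ)}, where v' denotes the derivative of v. -/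
/-!
Write `S_t v' = ∑ bₙ sin(nπx)` with `bₙ = 2 e^{-n²π²t} cₙ` and `cₙ = ∫₀¹ v' sin(nπ·)`.
Integrating by parts (the boundary terms vanish because `sin(nπ) = 0`) gives
`|cₙ| ≤ nπ ‖v‖_{L¹}`, so the series converges absolutely and uniformly, and orthogonality of
the sines gives `‖S_t v'‖²_{L²} = ∑ bₙ²/2`. As `y e^{-y} ≤ 1`, each term is at most
`(2/t) ‖v‖²_{L¹} e^{-n²π²t}`, and the integral test bounds the Gaussian sum `∑ e^{-π²t n²}` by
`∫₀^∞ e^{-π²t x²} dx = 1/(2√(πt))`. Hence `‖S_t v'‖²_{L²} ≤ t^{-3/2} ‖v‖²_{L¹}`.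
-/

open MeasureTheory Real

theorem integral_cos_int_mul_pi (j : ℤ) :
    ∫ x in (0:ℝ)..1, cos (j * π * x) = if j = 0 then 1 else 0 := by
  split_ifs with hj
  · simp [hj]
  · have hc : (j : ℝ) * π ≠ 0 := mul_ne_zero (Int.cast_ne_zero.2 hj) pi_ne_zero
    simp [intervalIntegral.integral_comp_mul_left (fun x => cos x) hc, sin_int_mul_pi]

theorem integral_sin_mul_sin_add_one (n m : ℕ) :
    ∫ x in (0:ℝ)..1, sin (((n:ℝ) + 1) * π * x) * sin (((m:ℝ) + 1) * π * x) =
      if n = m then 1 / 2 else 0 := by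
  have h : ∀ x : ℝ, sin (((n:ℝ) + 1) * π * x) * sin (((m:ℝ) + 1) * π * x) =
      (cos (((n - m : ℤ) : ℝ) * π * x) - cos (((n + m + 2 : ℤ) : ℝ) * π * x)) / 2 := by
    intro x
    have e₁ : ((n - m : ℤ) : ℝ) * π * x = (n + 1) * π * x - (m + 1) * π * x := by push_cast; ring
    have e₂ : ((n + m + 2 : ℤ) : ℝ) * π * x = (n + 1) * π * x + (m + 1) * π * x := by
      push_cast; ring
    rw [e₁, e₂, cos_sub, cos_add]
    ring
  simp_rw [h]
  rw [intervalIntegral.integral_div,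
    intervalIntegral.integral_sub (by apply Continuous.intervalIntegrable; fun_prop)
      (by apply Continuous.intervalIntegrable; fun_prop),
    integral_cos_int_mul_pi, integral_cos_int_mul_pi, if_neg (show (n + m + 2 : ℤ) ≠ 0 by omega)]
  by_cases hnm : n = m <;> simp [hnm, sub_eq_zero]

theorem hasSum_intervalIntegral_tsum_mul {a c C : ℝ} {b : ℕ → ℝ} {f : ℕ → ℝ → ℝ} {h : ℝ → ℝ}
    (hb : Summable fun n => |b n|) (hf : ∀ n, Continuous (f n)) (hf_le : ∀ n x, |f n x| ≤ 1)
    (hh : Continuous h) (hh_le : ∀ x, |h x| ≤ C) :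
    HasSum (fun n => b n * ∫ x in a..c, f n x * h x)
      (∫ x in a..c, (∑' n, b n * f n x) * h x) := by
  have hbf : ∀ n x, |b n * f n x| ≤ |b n| := fun n x => by
    rw [abs_mul]; exact mul_le_of_le_one_right (abs_nonneg _) (hf_le n x)
  have hsum : ∀ x, Summable fun n => b n * f n x := fun x =>
    hb.of_norm_bounded (fun n => hbf n x)
  simp_rw [← intervalIntegral.integral_const_mul, ← mul_assoc]
  refine intervalIntegral.hasSum_integral_of_dominated_convergence (fun n _ => |b n| * C)
    (fun n => (((continuous_const.mul (hf n)).mul hh)).aestronglyMeasurable)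
    (fun n => Filter.Eventually.of_forall fun x _ => ?_)
    (Filter.Eventually.of_forall fun _ _ => hb.mul_right C) intervalIntegrable_const
    (Filter.Eventually.of_forall fun x _ => (hsum x).hasSum.mul_right (h x))
  rw [Real.norm_eq_abs, abs_mul]
  exact mul_le_mul (hbf n x) (hh_le x) (abs_nonneg _) (abs_nonneg _)

theorem integral_sq_tsum_mul_sin {b : ℕ → ℝ} (hb : Summable fun n => |b n|) :
    ∫ x in (0:ℝ)..1, (∑' n : ℕ, b n * sin (((n:ℝ) + 1) * π * x)) ^ 2 = ∑' n : ℕ, b n ^ 2 / 2 := by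
  set g := fun x : ℝ => ∑' n : ℕ, b n * sin (((n:ℝ) + 1) * π * x)
  have hbs : ∀ n x, ‖b n * sin (((n:ℝ) + 1) * π * x)‖ ≤ |b n| := fun n x => by
    rw [Real.norm_eq_abs, abs_mul]; exact mul_le_of_le_one_right (abs_nonneg _) (abs_sin_le_one _)
  have hg : Continuous g := continuous_tsum (fun n => by fun_prop) hb hbs
  have hg_le : ∀ x, |g x| ≤ ∑' n, |b n| := fun x => by
    have hs := (hb.of_norm_bounded (hbs · x)).norm
    exact (norm_tsum_le_tsum_norm hs).trans (hs.tsum_le_tsum (hbs · x) hb)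
  have hsin : ∀ n : ℕ, Continuous fun x : ℝ => sin (((n:ℝ) + 1) * π * x) := fun n => by fun_prop
  have hinner : ∀ m : ℕ, ∫ x in (0:ℝ)..1, sin (((m:ℝ) + 1) * π * x) * g x = b m / 2 := by
    intro m
    have := hasSum_intervalIntegral_tsum_mul (a := 0) (c := 1) hb hsin (fun n x => abs_sin_le_one _)
      (hsin m) (fun x => abs_sin_le_one _)
    simp only [integral_sin_mul_sin_add_one, mul_ite, mul_zero] at this
    simp_rw [mul_comm (sin _)]
    rw [← this.tsum_eq, tsum_eq_single m fun n hn => if_neg hn, if_pos rfl]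
    ring
  have := hasSum_intervalIntegral_tsum_mul (a := 0) (c := 1) hb hsin (fun n x => abs_sin_le_one _)
    hg hg_le
  simp only [hinner] at this
  simp_rw [sq]
  rw [← this.tsum_eq]
  ring_nf

theorem sq_mul_exp_neg_two_mul_le {s : ℝ} (hs : 0 < s) (k : ℝ) :
    k ^ 2 * exp (-(2 * s) * k ^ 2) ≤ exp (-s * k ^ 2) / s := by
  have h := mul_le_mul_of_nonneg_right
    ((mul_exp_neg_le_exp_neg_one (s * k ^ 2)).trans (exp_le_one_iff.2 (by norm_num)))
    (exp_pos (-s * k ^ 2)).le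
  rw [le_div_iff₀ hs]
  have hsplit : exp (-(2 * s) * k ^ 2) = exp (-(s * k ^ 2)) * exp (-s * k ^ 2) := by
    rw [← exp_add]; ring_nf
  calc k ^ 2 * exp (-(2 * s) * k ^ 2) * s = s * k ^ 2 * exp (-(s * k ^ 2)) * exp (-s * k ^ 2) := by
        rw [hsplit]; ring
    _ ≤ exp (-s * k ^ 2) := by simpa using h

theorem antitoneOn_exp_neg_mul_sq {b : ℝ} (hb : 0 ≤ b) :
    AntitoneOn (fun x : ℝ => exp (-b * x ^ 2)) (Set.Ici 0) := fun x hx y _ hxy => by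
  simp only [neg_mul, exp_le_exp, neg_le_neg_iff]
  exact mul_le_mul_of_nonneg_left (pow_le_pow_left₀ hx hxy 2) hb

theorem summable_exp_neg_mul_add_one_sq {b : ℝ} (hb : 0 < b) :
    Summable fun n : ℕ => exp (-b * ((n:ℝ) + 1) ^ 2) := by
  have := (antitoneOn_exp_neg_mul_sq hb.le).summable_of_integrableOn_Ioi_zero
    (integrable_exp_neg_mul_sq hb).integrableOn (fun _ _ => (exp_pos _).le)
  exact_mod_cast (summable_nat_add_iff 1).2 this

theorem tsum_exp_neg_mul_add_one_sq_le {b : ℝ} (hb : 0 < b) :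
    ∑' n : ℕ, exp (-b * ((n:ℝ) + 1) ^ 2) ≤ √(π / b) / 2 := by
  rw [← integral_gaussian_Ioi]
  exact_mod_cast (antitoneOn_exp_neg_mul_sq hb.le).tsum_add_one_le_integral
    (integrable_exp_neg_mul_sq hb).integrableOn (fun _ _ => (exp_pos _).le)

theorem abs_integral_deriv_mul_sin_le {v v' : ℝ → ℝ}
    (hv : ∀ x ∈ Set.Icc (0:ℝ) 1, HasDerivAt v (v' x) x)
    (hv' : ContinuousOn v' (Set.Icc (0:ℝ) 1)) {k : ℝ} (hk : sin k = 0) :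
    |∫ x in (0:ℝ)..1, v' x * sin (k * x)| ≤ |k| * ∫ x in (0:ℝ)..1, |v x| := by
  have hI : Set.uIcc (0:ℝ) 1 = Set.Icc 0 1 := Set.uIcc_of_le zero_le_one
  have hvc : ContinuousOn v (Set.uIcc 0 1) := fun x hx =>
    (hv x (hI ▸ hx)).continuousAt.continuousWithinAt
  have hsin : ∀ x ∈ Set.uIcc (0:ℝ) 1, HasDerivAt (fun y => sin (k * y)) (k * cos (k * x)) x :=
    fun x _ => by simpa [mul_comm] using ((hasDerivAt_id x).const_mul k).sin
  have hparts := intervalIntegral.integral_mul_deriv_eq_deriv_mul hsin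
    (fun x hx => hv x (hI ▸ hx)) (by apply Continuous.intervalIntegrable; fun_prop)
    ((hI ▸ hv').intervalIntegrable)
  simp only [mul_one, mul_zero, hk, sin_zero, zero_mul, neg_zero, zero_sub] at hparts
  rw [← intervalIntegral.integral_const_mul]
  simp_rw [mul_comm (v' _)]
  rw [hparts, abs_neg, ← Real.norm_eq_abs]
  refine intervalIntegral.norm_integral_le_of_norm_le zero_le_one
    (Filter.Eventually.of_forall fun x _ => ?_) (hvc.norm.intervalIntegrable.const_mul _)
  simp only [norm_mul, Real.norm_eq_abs]
  gcongr
  exact mul_le_of_le_one_right (abs_nonneg k) (abs_cos_le_one _)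

theorem abs_sinCoeff_deriv_le {v v' : ℝ → ℝ}
    (hv : ∀ x ∈ Set.Icc (0:ℝ) 1, HasDerivAt v (v' x) x)
    (hv' : ContinuousOn v' (Set.Icc (0:ℝ) 1)) (n : ℕ) :
    |sinCoeff v' n| ≤ |((n:ℝ) + 1) * π| * ∫ x in (0:ℝ)..1, |v x| :=
  abs_integral_deriv_mul_sin_le hv hv' (by exact_mod_cast sin_nat_mul_pi (n + 1))

theorem sq_heat_coeff_div_two_le {t L c k : ℝ} (ht : 0 < t) (hc : |c| ≤ |k| * L) :
    (2 * exp (-t * k ^ 2) * c) ^ 2 / 2 ≤ 2 * L ^ 2 / t * exp (-t * k ^ 2) := by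
  have hc2 : c ^ 2 ≤ k ^ 2 * L ^ 2 := by
    rw [← sq_abs c, ← sq_abs k, ← mul_pow]
    exact pow_le_pow_left₀ (abs_nonneg c) hc 2
  calc (2 * exp (-t * k ^ 2) * c) ^ 2 / 2 = 2 * exp (-(2 * t) * k ^ 2) * c ^ 2 := by
        rw [mul_pow, mul_pow, ← exp_nat_mul]; ring_nf
    _ ≤ 2 * exp (-(2 * t) * k ^ 2) * (k ^ 2 * L ^ 2) := by gcongr
    _ = 2 * L ^ 2 * (k ^ 2 * exp (-(2 * t) * k ^ 2)) := by ring
    _ ≤ 2 * L ^ 2 * (exp (-t * k ^ 2) / t) := by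
        gcongr
        exact sq_mul_exp_neg_two_mul_le ht k
    _ = 2 * L ^ 2 / t * exp (-t * k ^ 2) := by ring

theorem abs_heat_coeff_le {t L c k : ℝ} (ht : 0 < t) (hk : 1 ≤ |k|) (hc : |c| ≤ |k| * L) :
    |2 * exp (-t * k ^ 2) * c| ≤ 4 * L / t * exp (-(t / 2) * k ^ 2) := by
  have hL : 0 ≤ L := nonneg_of_mul_nonneg_right ((abs_nonneg c).trans hc) (by linarith)
  have hkk : |k| ≤ k ^ 2 := by rw [← sq_abs]; nlinarith
  calc |2 * exp (-t * k ^ 2) * c| = 2 * exp (-(2 * (t / 2)) * k ^ 2) * |c| := by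
        rw [abs_mul, abs_mul, abs_two, abs_of_pos (exp_pos _)]; ring_nf
    _ ≤ 2 * exp (-(2 * (t / 2)) * k ^ 2) * (k ^ 2 * L) := by
        gcongr
        exact hc.trans (mul_le_mul_of_nonneg_right hkk hL)
    _ = 2 * L * (k ^ 2 * exp (-(2 * (t / 2)) * k ^ 2)) := by ring
    _ ≤ 2 * L * (exp (-(t / 2) * k ^ 2) / (t / 2)) := by
        gcongr
        exact sq_mul_exp_neg_two_mul_le (half_pos ht) k
    _ = 4 * L / t * exp (-(t / 2) * k ^ 2) := by ring

theorem heat1_eq_tsum (t : ℝ) (w : ℝ → ℝ) (x : ℝ) :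
    heat1 t w x =
      ∑' n : ℕ, 2 * exp (-t * (((n:ℝ) + 1) * π) ^ 2) * sinCoeff w n * sin (((n:ℝ) + 1) * π * x) :=
  tsum_congr fun n => by ring_nf

theorem integral_sq_heat1_le {t L : ℝ} {w : ℝ → ℝ} (ht : 0 < t)
    (hw : ∀ n : ℕ, |sinCoeff w n| ≤ |((n:ℝ) + 1) * π| * L) :
    ∫ x in (0:ℝ)..1, (heat1 t w x) ^ 2 ≤ L ^ 2 * t ^ (-(3/2 : ℝ)) := by
  set b : ℕ → ℝ := fun n => 2 * exp (-t * (((n:ℝ) + 1) * π) ^ 2) * sinCoeff w n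
  have hgauss : ∀ s : ℝ, ∀ n : ℕ,
      exp (-s * (((n:ℝ) + 1) * π) ^ 2) = exp (-(s * π ^ 2) * ((n:ℝ) + 1) ^ 2) :=
    fun s n => by ring_nf
  have hb : Summable fun n => |b n| := by
    have hle : ∀ n, |b n| ≤ 4 * L / t * exp (-(t / 2 * π ^ 2) * ((n:ℝ) + 1) ^ 2) := fun n => by
      have hk : 1 ≤ |((n:ℝ) + 1) * π| := by
        rw [abs_of_pos (by positivity)]
        nlinarith [pi_gt_three, (Nat.cast_nonneg n : (0:ℝ) ≤ n)]
      rw [← hgauss]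
      exact abs_heat_coeff_le ht hk (hw n)
    exact .of_nonneg_of_le (fun n => abs_nonneg _) hle
      ((summable_exp_neg_mul_add_one_sq (by positivity)).mul_left _)
  have hterm : ∀ n, b n ^ 2 / 2 ≤ 2 * L ^ 2 / t * exp (-(t * π ^ 2) * ((n:ℝ) + 1) ^ 2) :=
    fun n => by rw [← hgauss]; exact sq_heat_coeff_div_two_le ht (hw n)
  have hsum := (summable_exp_neg_mul_add_one_sq (b := t * π ^ 2) (by positivity)).mul_left
    (2 * L ^ 2 / t)
  have hroot : √(π / (t * π ^ 2)) ≤ t ^ (-(1/2 : ℝ)) := by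
    rw [rpow_neg ht.le, ← sqrt_eq_rpow, ← sqrt_inv]
    gcongr
    rw [div_le_iff₀ (by positivity), inv_mul_eq_div, mul_div_cancel_left₀ _ ht.ne']
    nlinarith [pi_gt_three]
  calc ∫ x in (0:ℝ)..1, (heat1 t w x) ^ 2 = ∑' n, b n ^ 2 / 2 := by
        simp_rw [heat1_eq_tsum]; exact integral_sq_tsum_mul_sin hb
    _ ≤ ∑' n : ℕ, 2 * L ^ 2 / t * exp (-(t * π ^ 2) * ((n:ℝ) + 1) ^ 2) :=
        (hsum.of_nonneg_of_le (fun n => by positivity) hterm).tsum_le_tsum hterm hsum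
    _ ≤ 2 * L ^ 2 / t * (√(π / (t * π ^ 2)) / 2) := by
        rw [tsum_mul_left]
        gcongr
        exact tsum_exp_neg_mul_add_one_sq_le (by positivity)
    _ ≤ L ^ 2 * (t ^ (-1 : ℝ) * t ^ (-(1/2 : ℝ))) := by
        rw [rpow_neg_one]
        calc _ = L ^ 2 * (t⁻¹ * √(π / (t * π ^ 2))) := by ring
          _ ≤ _ := by gcongr
    _ = L ^ 2 * t ^ (-(3/2 : ℝ)) := by rw [← rpow_add ht]; norm_num

theorem stmt_16_general (T : ℝ) (t : ℝ) (ht : t ∈ Set.Ioc (0:ℝ) T)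
    (v v' : ℝ → ℝ)
    (hv : ∀ x ∈ Set.Icc (0:ℝ) 1, HasDerivAt v (v' x) x)
    (hv' : ContinuousOn v' (Set.Icc (0:ℝ) 1)) :
    Real.sqrt (∫ x in (0:ℝ)..1, (heat1 t v' x) ^ 2) ≤
      4 * (t + 1) * t ^ (-(3/4 : ℝ)) * ∫ x in (0:ℝ)..1, |v x| := by
  have ht0 : 0 < t := ht.1
  have hL : 0 ≤ ∫ x in (0:ℝ)..1, |v x| :=
    intervalIntegral.integral_nonneg zero_le_one fun x _ => abs_nonneg _
  have hsq := integral_sq_heat1_le ht0 (abs_sinCoeff_deriv_le hv hv')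
  have hpow : (t ^ (-(3/4 : ℝ))) ^ 2 = t ^ (-(3/2 : ℝ)) := by
    rw [← rpow_natCast, ← rpow_mul ht0.le]; norm_num
  calc √(∫ x in (0:ℝ)..1, (heat1 t v' x) ^ 2) ≤ t ^ (-(3/4 : ℝ)) * ∫ x in (0:ℝ)..1, |v x| :=
        sqrt_le_iff.2 ⟨by positivity, by rwa [mul_pow, hpow, mul_comm]⟩
    _ ≤ 4 * (t + 1) * t ^ (-(3/4 : ℝ)) * ∫ x in (0:ℝ)..1, |v x| := by
        rw [mul_assoc]
        exact le_mul_of_one_le_left (by positivity) (by linarith)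

/-- **Lemma `lemmadditional`, last estimate.** For every `t ∈ (0,T]`
and every continuously differentiable `v : [0,1] → ℝ` (with derivative `v'`):
`‖S_t(v')‖_{L²((0,1),ℝ)} ≤ 4 (t+1) t^{−3/4} ‖v‖_{L¹((0,1),ℝ)}`. -/
theorem stmt_16 (T : ℝ) (hT : 0 < T) (t : ℝ) (ht : t ∈ Set.Ioc (0:ℝ) T)
    (v v' : ℝ → ℝ)
    (hv : ∀ x ∈ Set.Icc (0:ℝ) 1, HasDerivAt v (v' x) x)
    (hv' : ContinuousOn v' (Set.Icc (0:ℝ) 1)) :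
    Real.sqrt (∫ x in (0:ℝ)..1, (heat1 t v' x) ^ 2) ≤
      4 * (t + 1) * t ^ (-(3/4 : ℝ)) * ∫ x in (0:ℝ)..1, |v x| :=
  stmt_16_general T t ht v v' hv hv'
end

section
/- Let c ∈ ℝ and let v, w : [0,1] → ℝ be twice continuously differentiable functions with v(0) = v(1) = 0. Then ∫_0^1 v(x) v''(x) dx − c ∫_0^1 v'(x) (v(x) + w(x))² dx ≤ 2 c² (∫_0^1 v(x)² dx) (sup_{x∈[0,1]} |w(x)|)² + 2 c² (sup_{x∈[0,1]} |w(x)|)⁴. (The left-hand side equals the L² pairing ⟨v, v'' + F(v+w)⟩ where F(u) = c·∂(u²) is the Burgers nonlinearity with distributional derivative ∂.) -/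
/-!
Integrating by parts, `∫ v v'' = -∫ v'²`, and `∫ v' v² = [v³/3] = 0`, so only the part
`v' (2 v w + w²)` of the nonlinearity survives. Completing the square,
`-v'² - c v' g ≤ c² g² / 4`, and `g² ≤ 8 v² M² + 2 M⁴` for `g = 2 v w + w²` and
`|w| ≤ M`; integrating this pointwise bound gives the claim.
-/

open Set intervalIntegral

theorem abs_le_iSup_abs_of_continuousOn {α : Type*} [TopologicalSpace α] {s : Set α}
    {f : α → ℝ} (hs : IsCompact s) (hf : ContinuousOn f s) {x : α} (hx : x ∈ s) :
    |f x| ≤ ⨆ y : s, |f y| := by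
  obtain ⟨C, hC⟩ := hs.exists_bound_of_continuousOn hf
  exact le_ciSup (f := fun y : s => |f y|) ⟨C, by rintro _ ⟨y, rfl⟩; exact hC y y.2⟩ ⟨x, hx⟩

theorem neg_sq_sub_mul_le_sq_div_four (c a g : ℝ) :
    -a ^ 2 - c * (a * g) ≤ c ^ 2 * g ^ 2 / 4 := by
  nlinarith [sq_nonneg (a + c * g / 2)]

theorem sq_two_mul_mul_add_sq_le {v w M : ℝ} (hw : |w| ≤ M) :
    (2 * v * w + w ^ 2) ^ 2 ≤ 8 * M ^ 2 * v ^ 2 + 2 * M ^ 4 := by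
  have hw2 : w ^ 2 ≤ M ^ 2 := sq_le_sq' (abs_le.mp hw).1 (abs_le.mp hw).2
  have hw4 : w ^ 4 ≤ M ^ 4 := by nlinarith [sq_nonneg w]
  nlinarith [sq_nonneg (2 * v * w - w ^ 2), mul_le_mul_of_nonneg_left hw2 (sq_nonneg v)]

section Interval

variable {a b : ℝ} {v v' v'' w : ℝ → ℝ}

theorem integral_mul_deriv_deriv_eq_neg_integral_sq (hv : ∀ x ∈ uIcc a b, HasDerivAt v (v' x) x)
    (hv' : ∀ x ∈ uIcc a b, HasDerivAt v' (v'' x) x) (hv'' : ContinuousOn v'' (uIcc a b))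
    (ha : v a = 0) (hb : v b = 0) :
    ∫ x in a..b, v x * v'' x = -∫ x in a..b, v' x ^ 2 := by
  rw [integral_mul_deriv_eq_deriv_mul hv hv' (HasDerivAt.continuousOn hv').intervalIntegrable
    hv''.intervalIntegrable, ha, hb]
  simp [sq]

theorem integral_sq_mul_deriv_eq_zero (hv : ∀ x ∈ uIcc a b, HasDerivAt v (v' x) x)
    (hv' : ContinuousOn v' (uIcc a b)) (hab : v a = v b) :
    ∫ x in a..b, v x ^ 2 * v' x = 0 := by
  have hcube : ∀ x ∈ uIcc a b, HasDerivAt (fun y => v y ^ 3 / 3) (v x ^ 2 * v' x) x :=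
    fun x hx => (((hv x hx).fun_pow 3).div_const 3).congr_deriv (by ring)
  rw [integral_eq_sub_of_hasDerivAt hcube (ContinuousOn.intervalIntegrable
    (HasDerivAt.continuousOn hv |>.pow 2 |>.mul hv')), hab, sub_self]

theorem integral_deriv_mul_add_sq (hv : ∀ x ∈ uIcc a b, HasDerivAt v (v' x) x)
    (hv' : ContinuousOn v' (uIcc a b)) (hw : ContinuousOn w (uIcc a b)) (hab : v a = v b) :
    ∫ x in a..b, v' x * (v x + w x) ^ 2 = ∫ x in a..b, v' x * (2 * v x * w x + w x ^ 2) := by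
  have hcv : ContinuousOn v (uIcc a b) := HasDerivAt.continuousOn hv
  calc ∫ x in a..b, v' x * (v x + w x) ^ 2
      = ∫ x in a..b, (v x ^ 2 * v' x + v' x * (2 * v x * w x + w x ^ 2)) :=
        integral_congr fun x _ => by ring
    _ = ∫ x in a..b, v' x * (2 * v x * w x + w x ^ 2) := by
        rw [integral_add (ContinuousOn.intervalIntegrable (by fun_prop))
            (ContinuousOn.intervalIntegrable (by fun_prop)),
          integral_sq_mul_deriv_eq_zero hv hv' hab, zero_add]

theorem neg_integral_sq_sub_mul_integral_le (c M : ℝ) (hab : a ≤ b)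
    (hv : ContinuousOn v (uIcc a b)) (hv' : ContinuousOn v' (uIcc a b))
    (hw : ContinuousOn w (uIcc a b)) (hM : ∀ x ∈ Icc a b, |w x| ≤ M) :
    -(∫ x in a..b, v' x ^ 2) - c * ∫ x in a..b, v' x * (2 * v x * w x + w x ^ 2) ≤
      2 * c ^ 2 * M ^ 2 * (∫ x in a..b, v x ^ 2) + (b - a) * (c ^ 2 * M ^ 4 / 2) := by
  rw [← integral_neg, ← integral_const_mul, ← integral_sub (ContinuousOn.intervalIntegrable
      (by fun_prop)) (ContinuousOn.intervalIntegrable (by fun_prop)), ← integral_const_mul,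
    ← smul_eq_mul (b - a), ← integral_const, ← integral_add
      (ContinuousOn.intervalIntegrable (by fun_prop)) intervalIntegrable_const]
  refine integral_mono_on hab (ContinuousOn.intervalIntegrable (by fun_prop))
    (ContinuousOn.intervalIntegrable (by fun_prop)) fun x hx => ?_
  calc -v' x ^ 2 - c * (v' x * (2 * v x * w x + w x ^ 2))
      ≤ c ^ 2 * (2 * v x * w x + w x ^ 2) ^ 2 / 4 := neg_sq_sub_mul_le_sq_div_four _ _ _
    _ ≤ c ^ 2 * (8 * M ^ 2 * v x ^ 2 + 2 * M ^ 4) / 4 := by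
        gcongr; exact sq_two_mul_mul_add_sq_le (hM x hx)
    _ = 2 * c ^ 2 * M ^ 2 * v x ^ 2 + c ^ 2 * M ^ 4 / 2 := by ring

end Interval

theorem stmt_17_general (c : ℝ) (v v' v'' w w' : ℝ → ℝ)
    (hv : ∀ x ∈ Set.Icc (0:ℝ) 1, HasDerivAt v (v' x) x)
    (hv' : ∀ x ∈ Set.Icc (0:ℝ) 1, HasDerivAt v' (v'' x) x)
    (hv'' : ContinuousOn v'' (Set.Icc (0:ℝ) 1))
    (hw : ∀ x ∈ Set.Icc (0:ℝ) 1, HasDerivAt w (w' x) x)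
    (hv0 : v 0 = 0) (hv1 : v 1 = 0) :
    (∫ x in (0:ℝ)..1, v x * v'' x) - c * ∫ x in (0:ℝ)..1, v' x * (v x + w x) ^ 2 ≤
      2 * c ^ 2 * (∫ x in (0:ℝ)..1, v x ^ 2) * (⨆ x : Set.Icc (0:ℝ) 1, |w x|) ^ 2 +
        2 * c ^ 2 * (⨆ x : Set.Icc (0:ℝ) 1, |w x|) ^ 4 := by
  set M := ⨆ x : Icc (0:ℝ) 1, |w x|
  have hM : ∀ x ∈ Icc (0:ℝ) 1, |w x| ≤ M := fun x hx =>
    abs_le_iSup_abs_of_continuousOn isCompact_Icc (HasDerivAt.continuousOn hw) hx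
  rw [← uIcc_of_le (zero_le_one' ℝ)] at hv hv' hv'' hw
  have hcv' : ContinuousOn v' (uIcc 0 1) := HasDerivAt.continuousOn hv'
  rw [integral_mul_deriv_deriv_eq_neg_integral_sq hv hv' hv'' hv0 hv1,
    integral_deriv_mul_add_sq hv hcv' (HasDerivAt.continuousOn hw) (hv0.trans hv1.symm)]
  refine (neg_integral_sq_sub_mul_integral_le c M zero_le_one (HasDerivAt.continuousOn hv) hcv'
    (HasDerivAt.continuousOn hw) hM).trans ?_
  have hM4 : 0 ≤ c ^ 2 * M ^ 4 := by positivity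
  linarith

/-- **Lemma `lemburger`.** Let `c ∈ ℝ` and let `v, w : [0,1] → ℝ` be
twice continuously differentiable with `v(0) = v(1) = 0`. Then
`∫_0^1 v v'' dx − c ∫_0^1 v' (v+w)² dx
   ≤ 2c² (∫_0^1 v² dx) (sup_{[0,1]} |w|)² + 2c² (sup_{[0,1]} |w|)⁴`;
the left-hand side is the `L²` pairing `⟨v, v'' + F(v+w)⟩` with the Burgers
nonlinearity `F(u) = c ∂(u²)`. -/
theorem stmt_17 (c : ℝ) (v v' v'' w w' w'' : ℝ → ℝ)
    (hv : ∀ x ∈ Set.Icc (0:ℝ) 1, HasDerivAt v (v' x) x)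
    (hv' : ∀ x ∈ Set.Icc (0:ℝ) 1, HasDerivAt v' (v'' x) x)
    (hv'' : ContinuousOn v'' (Set.Icc (0:ℝ) 1))
    (hw : ∀ x ∈ Set.Icc (0:ℝ) 1, HasDerivAt w (w' x) x)
    (hw' : ∀ x ∈ Set.Icc (0:ℝ) 1, HasDerivAt w' (w'' x) x)
    (hw'' : ContinuousOn w'' (Set.Icc (0:ℝ) 1))
    (hv0 : v 0 = 0) (hv1 : v 1 = 0) :
    (∫ x in (0:ℝ)..1, v x * v'' x) - c * ∫ x in (0:ℝ)..1, v' x * (v x + w x) ^ 2 ≤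
      2 * c ^ 2 * (∫ x in (0:ℝ)..1, v x ^ 2) * (⨆ x : Set.Icc (0:ℝ) 1, |w x|) ^ 2 +
        2 * c ^ 2 * (⨆ x : Set.Icc (0:ℝ) 1, |w x|) ^ 4 :=
  stmt_17_general c v v' v'' w w' hv hv' hv'' hw hv0 hv1
end

section
/- For every T ∈ (0,∞), every γ ∈ [0,1/2) and every t ∈ (0,T]: ∑_{n=1}^∞ n^{2+2γ} e^{−2n²π²t} ≤ 4 (T² + 5) t^{−(3/2 + γ)}. -/
/-!
Put `a = π² t` and `x = √a (n + 1)`. Since `y^q ≤ y + y² ≤ 2 eʸ` for `1 ≤ q ≤ 2`, the factor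
`x^{2q} e^{-x²}` is at most `2`, while `e^{-x²} ≤ e^{1-x}`; hence the `n`-th term is at most
`2e a^{-q} e^{-√a (n+1)}`. The geometric series sums to `1/(e^{√a} - 1) ≤ 1/√a`, giving the bound
`2e a^{-(q + 1/2)}` with `q = 1 + γ`, and `π² ≥ 1`, `2e ≤ 20`.
-/

open Real

lemma rpow_le_two_mul_exp {y q : ℝ} (hy : 0 ≤ y) (hq1 : 1 ≤ q) (hq2 : q ≤ 2) :
    y ^ q ≤ 2 * exp y := by
  have hle : y ^ q ≤ y + y ^ 2 := by
    rcases le_total y 1 with hy1 | hy1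
    · have := rpow_le_rpow_of_exponent_ge' hy hy1 zero_le_one hq1
      rw [rpow_one] at this
      nlinarith
    · have := rpow_le_rpow_of_exponent_le hy1 hq2
      rw [rpow_two] at this
      nlinarith
  nlinarith [quadratic_le_exp_of_nonneg hy]

lemma rpow_mul_exp_neg_two_mul_sq_le {x q : ℝ} (hx : 0 ≤ x) (hq1 : 1 ≤ q) (hq2 : q ≤ 2) :
    x ^ (2 * q) * exp (-(2 * x ^ 2)) ≤ 2 * exp 1 * exp (-x) := by
  have hpeak : (x ^ 2) ^ q * exp (-(x ^ 2)) ≤ 2 := by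
    rw [exp_neg, ← div_eq_mul_inv, div_le_iff₀ (exp_pos _)]
    exact rpow_le_two_mul_exp (sq_nonneg x) hq1 hq2
  have htail : exp (-(x ^ 2)) ≤ exp 1 * exp (-x) := by
    rw [← exp_add, exp_le_exp]
    nlinarith [sq_nonneg (x - 1)]
  calc x ^ (2 * q) * exp (-(2 * x ^ 2))
      = ((x ^ 2) ^ q * exp (-(x ^ 2))) * exp (-(x ^ 2)) := by
        rw [rpow_mul hx, rpow_two, mul_assoc, ← exp_add]
        ring_nf
    _ ≤ 2 * (exp 1 * exp (-x)) := mul_le_mul hpeak htail (by positivity) zero_le_two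
    _ = 2 * exp 1 * exp (-x) := by ring

lemma rpow_mul_exp_neg_two_mul_mul_sq_le {a u q : ℝ} (ha : 0 < a) (hu : 0 ≤ u) (hq1 : 1 ≤ q)
    (hq2 : q ≤ 2) :
    u ^ (2 * q) * exp (-(2 * a * u ^ 2)) ≤ 2 * exp 1 * a ^ (-q) * exp (-(√a * u)) := by
  have hscaled := rpow_mul_exp_neg_two_mul_sq_le (mul_nonneg (sqrt_nonneg a) hu) hq1 hq2
  have hsqrt : √a ^ (2 * q) = a ^ q := by
    rw [rpow_mul (sqrt_nonneg a), rpow_two, sq_sqrt ha.le]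
  rw [mul_rpow (sqrt_nonneg a) hu, hsqrt, mul_pow, sq_sqrt ha.le, ← mul_assoc] at hscaled
  calc u ^ (2 * q) * exp (-(2 * a * u ^ 2))
      = a ^ (-q) * (a ^ q * u ^ (2 * q) * exp (-(2 * a * u ^ 2))) := by
        rw [rpow_neg ha.le]
        field_simp
    _ ≤ a ^ (-q) * (2 * exp 1 * exp (-(√a * u))) := by gcongr
    _ = 2 * exp 1 * a ^ (-q) * exp (-(√a * u)) := by ring

lemma hasSum_exp_neg_mul_succ {s : ℝ} (hs : 0 < s) :
    HasSum (fun n : ℕ => exp (-(s * (n + 1)))) (exp s - 1)⁻¹ := by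
  have hr : exp (-s) < 1 := exp_lt_one_iff.2 (neg_lt_zero.2 hs)
  have hgeom := (hasSum_geometric_of_lt_one (exp_pos _).le hr).mul_left (exp (-s))
  have hterm : ∀ n : ℕ, exp (-s) * exp (-s) ^ n = exp (-(s * (n + 1))) := fun n => by
    rw [← pow_succ', ← exp_nat_mul]
    push_cast
    ring_nf
  have hsum : exp (-s) * (1 - exp (-s))⁻¹ = (exp s - 1)⁻¹ := by
    have : exp s - 1 ≠ 0 := (sub_pos.2 (one_lt_exp_iff.2 hs)).ne'
    rw [exp_neg]
    field_simp
  simpa only [hterm, hsum] using hgeom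

theorem tsum_succ_rpow_mul_exp_neg_two_mul_mul_sq_le {a q : ℝ} (ha : 0 < a) (hq1 : 1 ≤ q)
    (hq2 : q ≤ 2) :
    ∑' n : ℕ, ((n : ℝ) + 1) ^ (2 * q) * exp (-(2 * a * ((n : ℝ) + 1) ^ 2))
      ≤ 2 * exp 1 * a ^ (-(q + 1 / 2)) := by
  have hs : 0 < √a := sqrt_pos.2 ha
  have hgeom := hasSum_exp_neg_mul_succ hs
  have hmajorant := hgeom.summable.mul_left (2 * exp 1 * a ^ (-q))
  have hterm : ∀ n : ℕ, ((n : ℝ) + 1) ^ (2 * q) * exp (-(2 * a * ((n : ℝ) + 1) ^ 2))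
      ≤ 2 * exp 1 * a ^ (-q) * exp (-(√a * (n + 1))) := fun n =>
    rpow_mul_exp_neg_two_mul_mul_sq_le ha (by positivity) hq1 hq2
  have hsummable := hmajorant.of_nonneg_of_le (fun n => by positivity) hterm
  calc ∑' n : ℕ, ((n : ℝ) + 1) ^ (2 * q) * exp (-(2 * a * ((n : ℝ) + 1) ^ 2))
      ≤ ∑' n : ℕ, 2 * exp 1 * a ^ (-q) * exp (-(√a * (n + 1))) :=
        hsummable.tsum_le_tsum hterm hmajorant
    _ = 2 * exp 1 * a ^ (-q) * (exp √a - 1)⁻¹ := by rw [tsum_mul_left, hgeom.tsum_eq]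
    _ ≤ 2 * exp 1 * a ^ (-q) * (√a)⁻¹ := by
        gcongr
        linarith [add_one_le_exp √a]
    _ = 2 * exp 1 * a ^ (-(q + 1 / 2)) := by
        rw [sqrt_eq_rpow, ← rpow_neg ha.le, mul_assoc, ← rpow_add ha]
        ring_nf

theorem stmt_19_general (T : ℝ) (γ : ℝ) (hγ0 : 0 ≤ γ) (hγ1 : γ < 1/2)
    (t : ℝ) (ht : t ∈ Set.Ioc 0 T) :
    ∑' n : ℕ, ((n:ℝ) + 1) ^ ((2:ℝ) + 2 * γ) *
        Real.exp (-2 * ((n:ℝ) + 1) ^ 2 * Real.pi ^ 2 * t)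
      ≤ 4 * (T ^ 2 + 5) * t ^ (-(3/2 + γ)) := by
  have ht0 : 0 < t := ht.1
  have hsum := tsum_succ_rpow_mul_exp_neg_two_mul_mul_sq_le (q := 1 + γ)
    (by positivity : 0 < π ^ 2 * t) (by linarith) (by linarith)
  have hpi : (π ^ 2) ^ (-(3/2 + γ)) ≤ 1 :=
    rpow_le_one_of_one_le_of_nonpos (by nlinarith [pi_gt_three]) (by linarith)
  have he : 2 * exp 1 ≤ 4 * (T ^ 2 + 5) := by nlinarith [exp_one_lt_d9, sq_nonneg T]
  calc ∑' n : ℕ, ((n:ℝ) + 1) ^ ((2:ℝ) + 2 * γ) * exp (-2 * ((n:ℝ) + 1) ^ 2 * π ^ 2 * t)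
      = ∑' n : ℕ, ((n:ℝ) + 1) ^ (2 * (1 + γ)) * exp (-(2 * (π ^ 2 * t) * ((n:ℝ) + 1) ^ 2)) :=
        tsum_congr fun n => by congr 2 <;> ring
    _ ≤ 2 * exp 1 * (π ^ 2 * t) ^ (-(1 + γ + 1 / 2)) := hsum
    _ = 2 * exp 1 * (π ^ 2) ^ (-(3/2 + γ)) * t ^ (-(3/2 + γ)) := by
        rw [mul_rpow (by positivity) ht0.le]
        ring_nf
    _ ≤ 4 * (T ^ 2 + 5) * 1 * t ^ (-(3/2 + γ)) := by gcongr
    _ = 4 * (T ^ 2 + 5) * t ^ (-(3/2 + γ)) := by ring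

/-- For every `T ∈ (0,∞)`, every `γ ∈ [0,1/2)` and every `t ∈ (0,T]`:
`∑_{n=1}^∞ n^{2+2γ} e^{−2n²π²t} ≤ 4 (T² + 5) t^{−(3/2 + γ)}`
(the sum over `n ∈ {1,2,…}` is written as a sum over `n : ℕ` with `n` shifted by one). -/
theorem stmt_19 (T : ℝ) (hT : 0 < T) (γ : ℝ) (hγ0 : 0 ≤ γ) (hγ1 : γ < 1/2)
    (t : ℝ) (ht : t ∈ Set.Ioc 0 T) :
    ∑' n : ℕ, ((n:ℝ) + 1) ^ ((2:ℝ) + 2 * γ) *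
        Real.exp (-2 * ((n:ℝ) + 1) ^ 2 * Real.pi ^ 2 * t)
      ≤ 4 * (T ^ 2 + 5) * t ^ (-(3/2 + γ)) :=
  stmt_19_general T γ hγ0 hγ1 t ht
end
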